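/- arXiv:2506.14773 — 2 statements merged into one kernel-verified Lean document; each statement's English description precedes it below -/
import Mathlib

section
/- Let A = (a₁,a₂), B = (b₁,b₂), C = (c₁,c₂), D = (d₁,d₂) ∈ ℝ² be pairwise distinct with A, B, C not collinear, let k_A, k_B, k_C, k_D be nonzero reals, and set Δ = (a₁−b₁)(a₂−c₂) − (a₂−b₂)(a₁−c₁). If (X, Y) is a real solution of System (*), then, writing γ_T = Γ_T(Y), the identity [(γ_B−γ_A)(a₂−c₂) − (a₂−b₂)(γ_C−γ_A) − 2Δa₁]² + [(a₁−b₁)(γ_C−γ_A) − (γ_B−γ_A)(a₁−c₁) − 2Δa₂]² − 4Δ²(γ_A + ‖A‖²) = 0 holds. -/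
/-- The squared Euclidean "norm" on `ℝ²`: sum of squares of the coordinates. -/
def sq2 (u : ℝ × ℝ) : ℝ := u.1 ^ 2 + u.2 ^ 2

/-- `(X, Y) ∈ ℝ² × ℝ²` is a real solution of System (*) for the configuration
`A, B, C, D` with constants `kA, kB, kC, kD`. -/
def IsRealSol (A B C D : ℝ × ℝ) (kA kB kC kD : ℝ) (X Y : ℝ × ℝ) : Prop :=
  (X ≠ A ∧ X ≠ B ∧ X ≠ C ∧ X ≠ D) ∧
  (Y ≠ A ∧ Y ≠ B ∧ Y ≠ C ∧ Y ≠ D) ∧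
  1 / sq2 (X - A) + 1 / sq2 (Y - A) = kA ∧
  1 / sq2 (X - B) + 1 / sq2 (Y - B) = kB ∧
  1 / sq2 (X - C) + 1 / sq2 (Y - C) = kC ∧
  1 / sq2 (X - D) + 1 / sq2 (Y - D) = kD

/-- The rational function `Γ_T(Y) = ‖Y−T‖²/(k_T‖Y−T‖² − 1) − ‖T‖²`. -/
noncomputable def Gamma (k : ℝ) (T Y : ℝ × ℝ) : ℝ :=
  sq2 (Y - T) / (k * sq2 (Y - T) - 1) - sq2 T

lemma sq2_pos (u : ℝ × ℝ) (h : u ≠ 0) : 0 < sq2 u := by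
  have h1 : u.1 ≠ 0 ∨ u.2 ≠ 0 := by
    by_contra hc
    push_neg at hc
    exact h (Prod.ext hc.1 hc.2)
  unfold sq2
  rcases h1 with h1 | h1
  · have := pow_pos (abs_pos.mpr h1) 2
    nlinarith [sq_nonneg u.2, sq_abs u.1]
  · have := pow_pos (abs_pos.mpr h1) 2
    nlinarith [sq_nonneg u.1, sq_abs u.2]

lemma gamma_eq (k : ℝ) (T X Y : ℝ × ℝ) (hX : X ≠ T) (hY : Y ≠ T)
    (h : 1 / sq2 (X - T) + 1 / sq2 (Y - T) = k) :
    Gamma k T Y = sq2 (X - T) - sq2 T := by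
  have hx : 0 < sq2 (X - T) := sq2_pos _ (sub_ne_zero.mpr hX)
  have hy : 0 < sq2 (Y - T) := sq2_pos _ (sub_ne_zero.mpr hY)
  have hx' := hx.ne'
  have hy' := hy.ne'
  have hk : k * sq2 (Y - T) - 1 = sq2 (Y - T) / sq2 (X - T) := by
    field_simp
    field_simp at h
    nlinarith [h]
  have hne : k * sq2 (Y - T) - 1 ≠ 0 := by
    rw [hk]
    positivity
  unfold Gamma
  rw [hk]
  field_simp

theorem circle_identity_at_solution
    (a1 a2 b1 b2 c1 c2 d1 d2 : ℝ) (kA kB kC kD : ℝ)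
    (A B C D : ℝ × ℝ)
    (hA : A = (a1, a2)) (hB : B = (b1, b2)) (hC : C = (c1, c2)) (hD : D = (d1, d2))
    (hAB : A ≠ B) (hAC : A ≠ C) (hAD : A ≠ D)
    (hBC : B ≠ C) (hBD : B ≠ D) (hCD : C ≠ D)
    (habc : ¬ Collinear ℝ ({A, B, C} : Set (ℝ × ℝ)))
    (hkA : kA ≠ 0) (hkB : kB ≠ 0) (hkC : kC ≠ 0) (hkD : kD ≠ 0)
    (Δ : ℝ) (hΔ : Δ = (a1 - b1) * (a2 - c2) - (a2 - b2) * (a1 - c1))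
    (X Y : ℝ × ℝ)
    (hsol : IsRealSol A B C D kA kB kC kD X Y) :
    ((Gamma kB B Y - Gamma kA A Y) * (a2 - c2)
        - (a2 - b2) * (Gamma kC C Y - Gamma kA A Y) - 2 * Δ * a1) ^ 2 +
    ((a1 - b1) * (Gamma kC C Y - Gamma kA A Y)
        - (Gamma kB B Y - Gamma kA A Y) * (a1 - c1) - 2 * Δ * a2) ^ 2 -
    4 * Δ ^ 2 * (Gamma kA A Y + sq2 A) = 0 := by
  obtain ⟨⟨hXA, hXB, hXC, -⟩, ⟨hYA, hYB, hYC, -⟩, eA, eB, eC, -⟩ := hsol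
  rw [gamma_eq kA A X Y hXA hYA eA, gamma_eq kB B X Y hXB hYB eB,
    gamma_eq kC C X Y hXC hYC eC]
  subst hA hB hC hΔ
  simp only [sq2, Prod.fst_sub, Prod.snd_sub]
  ring
end

section
/- Normalize A = (0, 0) and B = (1, 0), let C, D ∈ ℝ² make A, B, C, D pairwise distinct, and let k_A, k_B, k_C, k_D be nonzero reals. Let (X, Y) be a real solution of System (*) with Y = (y₁, y₂), and for T ∈ {A, B} set Γ̄_T = ‖Y−T‖²/(k_T‖Y−T‖² − 1). Then k_AΓ̄_A − 1 ≠ 0 and k_BΓ̄_B − 1 ≠ 0, and y₁ = (1/2)·[Γ̄_A(k_BΓ̄_B − 1) − Γ̄_B(k_AΓ̄_A − 1) + (k_AΓ̄_A − 1)(k_BΓ̄_B − 1)] / [(k_AΓ̄_A − 1)(k_BΓ̄_B − 1)]. -/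
/-- `Γ̄_T(Y) = ‖Y−T‖²/(k_T‖Y−T‖² − 1)`. -/
noncomputable def GammaBar (k : ℝ) (T Y : ℝ × ℝ) : ℝ :=
  sq2 (Y - T) / (k * sq2 (Y - T) - 1)

lemma sq2_ne_zero {u : ℝ × ℝ} (hu : u ≠ 0) : sq2 u ≠ 0 := by
  intro h
  have h1 : u.1 ^ 2 = 0 ∧ u.2 ^ 2 = 0 :=
    (add_eq_zero_iff_of_nonneg (sq_nonneg _) (sq_nonneg _)).mp h
  exact hu (Prod.ext (pow_eq_zero_iff two_ne_zero |>.mp h1.1)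
    (pow_eq_zero_iff two_ne_zero |>.mp h1.2))

lemma sq2_sub_ne_zero {X T : ℝ × ℝ} (h : X ≠ T) : sq2 (X - T) ≠ 0 :=
  sq2_ne_zero (sub_ne_zero.mpr h)

lemma mul_sub_one_eq_div_of_one_div_add_one_div {a b k : ℝ} (ha : a ≠ 0) (hb : b ≠ 0)
    (h : 1 / a + 1 / b = k) : k * a - 1 = a / b := by
  subst h
  field_simp
  ring

section GammaBar

variable {k : ℝ} {T X Y : ℝ × ℝ}

lemma gammaBar_eq_sq2 (hX : X ≠ T) (hY : Y ≠ T)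
    (h : 1 / sq2 (X - T) + 1 / sq2 (Y - T) = k) : GammaBar k T Y = sq2 (X - T) := by
  have hx := sq2_sub_ne_zero hX
  have hy := sq2_sub_ne_zero hY
  rw [GammaBar, mul_sub_one_eq_div_of_one_div_add_one_div hy hx ((add_comm _ _).trans h)]
  field_simp

lemma mul_gammaBar_sub_one (hX : X ≠ T) (hY : Y ≠ T)
    (h : 1 / sq2 (X - T) + 1 / sq2 (Y - T) = k) :
    k * GammaBar k T Y - 1 = sq2 (X - T) / sq2 (Y - T) := by
  rw [gammaBar_eq_sq2 hX hY h, mul_sub_one_eq_div_of_one_div_add_one_div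
    (sq2_sub_ne_zero hX) (sq2_sub_ne_zero hY) h]

end GammaBar

lemma sq2_sub_origin_sub_sq2_sub_unit (y1 y2 : ℝ) :
    sq2 ((y1, y2) - ((0 : ℝ), (0 : ℝ))) - sq2 ((y1, y2) - ((1 : ℝ), (0 : ℝ))) = 2 * y1 - 1 := by
  simp only [sq2, Prod.mk_sub_mk]
  ring

lemma half_mul_div_eq {a b c d : ℝ} (ha : a ≠ 0) (hb : b ≠ 0) (hc : c ≠ 0) (hd : d ≠ 0) :
    (1 / 2) * (a * (b / d) - b * (a / c) + (a / c) * (b / d)) / ((a / c) * (b / d))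
      = (c - d + 1) / 2 := by
  field_simp

theorem first_coordinate_formula_general
    (C D : ℝ × ℝ) (kA kB kC kD : ℝ)
    (A B : ℝ × ℝ) (hA : A = ((0 : ℝ), (0 : ℝ))) (hB : B = ((1 : ℝ), (0 : ℝ)))
    (X Y : ℝ × ℝ) (y1 y2 : ℝ) (hY : Y = (y1, y2))
    (hsol : IsRealSol A B C D kA kB kC kD X Y) :
    kA * GammaBar kA A Y - 1 ≠ 0 ∧ kB * GammaBar kB B Y - 1 ≠ 0 ∧
    y1 = (1 / 2) *
      (GammaBar kA A Y * (kB * GammaBar kB B Y - 1)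
        - GammaBar kB B Y * (kA * GammaBar kA A Y - 1)
        + (kA * GammaBar kA A Y - 1) * (kB * GammaBar kB B Y - 1)) /
      ((kA * GammaBar kA A Y - 1) * (kB * GammaBar kB B Y - 1)) := by
  obtain ⟨⟨hXA, hXB, -, -⟩, ⟨hYA, hYB, -, -⟩, eA, eB, -, -⟩ := hsol
  have hxa := sq2_sub_ne_zero hXA
  have hxb := sq2_sub_ne_zero hXB
  have hya := sq2_sub_ne_zero hYA
  have hyb := sq2_sub_ne_zero hYB
  rw [mul_gammaBar_sub_one hXA hYA eA, mul_gammaBar_sub_one hXB hYB eB,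
    gammaBar_eq_sq2 hXA hYA eA, gammaBar_eq_sq2 hXB hYB eB, half_mul_div_eq hxa hxb hya hyb]
  refine ⟨div_ne_zero hxa hya, div_ne_zero hxb hyb, ?_⟩
  subst hA hB hY
  linarith [sq2_sub_origin_sub_sq2_sub_unit y1 y2]

theorem first_coordinate_formula
    (C D : ℝ × ℝ) (kA kB kC kD : ℝ)
    (A B : ℝ × ℝ) (hA : A = ((0 : ℝ), (0 : ℝ))) (hB : B = ((1 : ℝ), (0 : ℝ)))
    (hAB : A ≠ B) (hAC : A ≠ C) (hAD : A ≠ D)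
    (hBC : B ≠ C) (hBD : B ≠ D) (hCD : C ≠ D)
    (hkA : kA ≠ 0) (hkB : kB ≠ 0) (hkC : kC ≠ 0) (hkD : kD ≠ 0)
    (X Y : ℝ × ℝ) (y1 y2 : ℝ) (hY : Y = (y1, y2))
    (hsol : IsRealSol A B C D kA kB kC kD X Y) :
    kA * GammaBar kA A Y - 1 ≠ 0 ∧ kB * GammaBar kB B Y - 1 ≠ 0 ∧
    y1 = (1 / 2) *
      (GammaBar kA A Y * (kB * GammaBar kB B Y - 1)
        - GammaBar kB B Y * (kA * GammaBar kA A Y - 1)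
        + (kA * GammaBar kA A Y - 1) * (kB * GammaBar kB B Y - 1)) /
      ((kA * GammaBar kA A Y - 1) * (kB * GammaBar kB B Y - 1)) :=
  first_coordinate_formula_general C D kA kB kC kD A B hA hB X Y y1 y2 hY hsol
end
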